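/- Let G act cocompactly on a locally finite tree T, let E be an end of T faced by some collapsing pair under a locally surjective G-morphism q : T̃ → T from a minimal G-tree T̃, and let τ be a geodesic ray representing E. Then for every λ > 0 there exist two points ỹ₁, ỹ₂ ∈ q^{-1}(HB_0(τ)) lying in different connected components of q^{-1}(HB_{-λ}(τ)). -/

import Mathlib

/-!
Translate the collapsing pair `p ~ w₁, w₂` by a group element that moves its base point `q p`
far outside the horoball `HB_{-λ}(τ)`; such an element exists because cocompactness and local
finiteness force some `h ∈ G` to map an edge of `τ` to an edge of `τ` arbitrarily far ahead.
Lifting the geodesic from `q w₁` to a vertex `τ n` of the ray at `w₁` and at `w₂` gives two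
points over `τ n ∈ HB_0(τ)`. Since `q p` is not on that geodesic, `p` is on neither lift, so in
the tree `T̃` the segment `w₁ p w₂` forces every path between the two endpoints through `p`.
-/

/-- A geodesic ray in a tree: an injective sequence of consecutively adjacent
vertices. -/
def IsGeodRay {V : Type*} (T : SimpleGraph V) (τ : ℕ → V) : Prop :=
  (∀ n, T.Adj (τ n) (τ (n + 1))) ∧ Function.Injective τ

/-- `p` lies in the horoball `HB_r(τ)`: the Busemann function
`β_τ(p) = lim_n (n - d(τ(n), p))` (limit of a nondecreasing sequence) is at
least `r`. -/
def InHoroball {V : Type*} (T : SimpleGraph V) (τ : ℕ → V) (r : ℝ) (p : V) : Prop :=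
  ∃ n : ℕ, r ≤ (n : ℝ) - (T.dist (τ n) p : ℝ)

/-- A `G`-tree is minimal if it has no proper nonempty `G`-invariant subtree. -/
def IsMinimalGTree {V : Type*} (T : SimpleGraph V) (G : Type*) [Group G]
    [MulAction G V] : Prop :=
  ∀ A : Set V, A.Nonempty →
    (∀ a b c : V, a ∈ A → c ∈ A → T.dist a b + T.dist b c = T.dist a c → b ∈ A) →
    (∀ (g : G) (x : V), x ∈ A → g • x ∈ A) →
    A = Set.univ

/-- A collapsing pair under `q` faces the end represented by `τ`. -/
def CollapsingPairFacesRay {W V : Type*} (S : SimpleGraph W) (T : SimpleGraph V)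
    (q : W → V) (τ : ℕ → V) : Prop :=
  ∃ p w₁ w₂ : W, S.Adj p w₁ ∧ S.Adj p w₂ ∧ w₁ ≠ w₂ ∧ q w₁ = q w₂ ∧
    ∃ N : ℕ, ∀ n ≥ N, T.dist (q p) (τ n) = T.dist (q w₁) (τ n) + 1

open SimpleGraph

namespace SimpleGraph

variable {V W : Type*} {T : SimpleGraph V} {S : SimpleGraph W}

lemma Connected.dist_map_le (hT : T.Connected) (f : T →g S) (x y : V) :
    S.dist (f x) (f y) ≤ T.dist x y := by
  obtain ⟨p, hp⟩ := hT.exists_walk_length_eq_dist x y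
  calc S.dist (f x) (f y) ≤ (p.map f).length := dist_le _
    _ = T.dist x y := by rw [Walk.length_map, hp]

lemma Connected.dist_smul {G : Type*} [Group G] [MulAction G V] (hT : T.Connected)
    (hact : ∀ (g : G) (x y : V), T.Adj x y → T.Adj (g • x) (g • y)) (g : G) (x y : V) :
    T.dist (g • x) (g • y) = T.dist x y := by
  have hle : ∀ (g : G) (x y : V), T.dist (g • x) (g • y) ≤ T.dist x y := fun g ↦
    hT.dist_map_le ⟨(g • ·), hact g _ _⟩
  refine le_antisymm (hle g x y) ?_
  simpa using hle g⁻¹ (g • x) (g • y)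

lemma Connected.dist_inv_smul {G : Type*} [Group G] [MulAction G V] (hT : T.Connected)
    (hact : ∀ (g : G) (x y : V), T.Adj x y → T.Adj (g • x) (g • y)) (g : G) (x y : V) :
    T.dist (g⁻¹ • x) y = T.dist x (g • y) := by
  rw [← hT.dist_smul hact g, smul_inv_smul]

lemma IsTree.eq_of_adj_of_dist_eq_add_one (hT : T.IsTree) {x a b c : V} (ha : T.Adj a c)
    (hb : T.Adj b c) (hac : T.dist x c = T.dist x a + 1) (hbc : T.dist x c = T.dist x b + 1) :
    a = b := by
  obtain ⟨p, -, hp⟩ := hT.connected.exists_path_of_dist x a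
  obtain ⟨p', -, hp'⟩ := hT.connected.exists_path_of_dist x b
  have hpath : (p.concat ha).IsPath :=
    (p.concat ha).isPath_of_length_eq_dist (by rw [Walk.length_concat, hp, hac])
  have hpath' : (p'.concat hb).IsPath :=
    (p'.concat hb).isPath_of_length_eq_dist (by rw [Walk.length_concat, hp', hbc])
  exact (Walk.concat_inj (congrArg Subtype.val
    ((hT.isAcyclic.subsingleton_path _ _).elim ⟨_, hpath⟩ ⟨_, hpath'⟩))).1

lemma IsAcyclic.mem_support_of_adj_of_adj (hS : S.IsAcyclic) {p a b : W} (ha : S.Adj p a)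
    (hb : S.Adj p b) (hab : a ≠ b) (w : S.Walk a b) : p ∈ w.support := by
  classical
  have hpath : (Walk.cons ha.symm (Walk.cons hb Walk.nil)).IsPath := by
    simp [Walk.isPath_def, ha.ne', hb.ne, hab]
  have hbypass : w.bypass = Walk.cons ha.symm (Walk.cons hb Walk.nil) :=
    congrArg Subtype.val ((hS.subsingleton_path _ _).elim ⟨_, w.bypass_isPath⟩ ⟨_, hpath⟩)
  exact w.support_bypass_subset_support (by simp [hbypass])

lemma exists_walk_lift {q : W → V}
    (hlocsurj : ∀ (w : W) (v : V), T.Adj (q w) v → ∃ w' : W, S.Adj w w' ∧ q w' = v)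
    {x y : V} (p : T.Walk x y) (w : W) (hw : q w = x) :
    ∃ (w' : W) (p' : S.Walk w w'), q w' = y ∧ p'.support.map q = p.support := by
  induction p generalizing w with
  | nil => exact ⟨w, Walk.nil, hw, by simp [hw]⟩
  | cons hxz _ ih =>
    obtain ⟨w₀, hw₀, hqw₀⟩ := hlocsurj w _ (hw ▸ hxz)
    obtain ⟨w', p', hw', hsupp⟩ := ih w₀ hqw₀
    exact ⟨w', Walk.cons hw₀ p', hw', by simp [hsupp, hw]⟩

lemma exists_lifts_separated_by {q : W → V} (hS : S.IsAcyclic) (hT : T.Connected)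
    (hlocsurj : ∀ (w : W) (v : V), T.Adj (q w) v → ∃ w' : W, S.Adj w w' ∧ q w' = v)
    {p a b : W} (ha : S.Adj p a) (hb : S.Adj p b) (hab : a ≠ b) (hqab : q a = q b) {z : V}
    (hz : T.dist (q p) z = T.dist (q a) z + 1) :
    ∃ y₁ y₂ : W, q y₁ = z ∧ q y₂ = z ∧ ∀ w : S.Walk y₁ y₂, p ∈ w.support := by
  classical
  obtain ⟨geod, hgeod⟩ := hT.exists_walk_length_eq_dist (q a) z
  obtain ⟨y₁, l₁, hy₁, hl₁⟩ := exists_walk_lift hlocsurj geod a rfl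
  obtain ⟨y₂, l₂, hy₂, hl₂⟩ := exists_walk_lift hlocsurj geod b hqab.symm
  have hgeod_avoid : q p ∉ geod.support := fun hmem ↦ by
    have := (dist_le (geod.dropUntil _ hmem)).trans (geod.length_dropUntil_le_length hmem)
    omega
  have havoid : ∀ {x y : W} (l : S.Walk x y), l.support.map q = geod.support → p ∉ l.support :=
    fun l hl hmem ↦ hgeod_avoid (hl ▸ List.mem_map_of_mem (f := q) hmem)
  refine ⟨y₁, y₂, hy₁, hy₂, fun w ↦ ?_⟩
  have hmem := hS.mem_support_of_adj_of_adj ha hb hab (l₁.append (w.append l₂.reverse))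
  simp only [Walk.mem_support_append_iff, Walk.support_reverse, List.mem_reverse] at hmem
  rcases hmem with h | h | h
  · exact absurd h (havoid l₁ hl₁)
  · exact h
  · exact absurd h (havoid l₂ hl₂)

lemma exists_walk_of_adj_chain (c : ℕ → W) (n : ℕ) (hc : ∀ i < n, S.Adj (c i) (c (i + 1))) :
    ∃ w : S.Walk (c 0) (c n), ∀ z ∈ w.support, ∃ i ≤ n, c i = z := by
  induction n with
  | zero => exact ⟨Walk.nil, by simp⟩
  | succ k ih =>
    obtain ⟨w, hw⟩ := ih fun i hi ↦ hc i (by omega)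
    refine ⟨w.concat (hc k (by omega)), fun z hz ↦ ?_⟩
    rw [Walk.support_concat, List.mem_append, List.mem_singleton] at hz
    rcases hz with hz | rfl
    · obtain ⟨i, hi, rfl⟩ := hw z hz
      exact ⟨i, by omega, rfl⟩
    · exact ⟨k + 1, le_rfl, rfl⟩

end SimpleGraph

section Ray

variable {V : Type*} {T : SimpleGraph V} {τ : ℕ → V}

/-- The geodesic from `x` to the end of `τ` passes through `τ n`. -/
def RecedesFrom (T : SimpleGraph V) (τ : ℕ → V) (x : V) (n : ℕ) : Prop :=
  ∀ i, T.dist x (τ (n + i)) = T.dist x (τ n) + i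

lemma RecedesFrom.mono {x : V} {t n : ℕ} (h : RecedesFrom T τ x t) (htn : t ≤ n) :
    RecedesFrom T τ x n := fun i ↦ by
  have h₁ := h (n - t)
  have h₂ := h (n - t + i)
  rw [show t + (n - t) = n by omega] at h₁
  rw [show t + (n - t + i) = n + i by omega] at h₂
  omega

lemma recedesFrom_of_dist_succ (hT : T.IsTree) (hτ : IsGeodRay T τ) {x : V} {n : ℕ}
    (h : T.dist x (τ (n + 1)) = T.dist x (τ n) + 1) : RecedesFrom T τ x n := by
  have hstep : ∀ i, T.dist x (τ (n + i + 1)) = T.dist x (τ (n + i)) + 1 := by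
    intro i
    induction i with
    | zero => exact h
    | succ i ih =>
      refine (hT.dist_eq_dist_add_one_of_adj x (hτ.1 (n + (i + 1)))).resolve_left fun hback ↦ ?_
      have := hT.eq_of_adj_of_dist_eq_add_one (hτ.1 (n + i)) (hτ.1 (n + i + 1)).symm ih hback
      exact absurd (hτ.2 this) (by omega)
  intro i
  induction i with
  | zero => rfl
  | succ i ih => rw [← add_assoc, hstep i, ih, add_assoc]

lemma exists_recedesFrom (hT : T.IsTree) (hτ : IsGeodRay T τ) (x : V) :
    ∃ t, RecedesFrom T τ x t := by
  by_contra! hnever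
  have hback : ∀ j, T.dist x (τ j) = T.dist x (τ (j + 1)) + 1 := fun j ↦
    (hT.dist_eq_dist_add_one_of_adj x (hτ.1 j)).resolve_right
      fun h ↦ hnever j (recedesFrom_of_dist_succ hT hτ h)
  have hsum : ∀ j, T.dist x (τ 0) = T.dist x (τ j) + j := by
    intro j
    induction j with
    | zero => rfl
    | succ j ih => rw [ih, hback j]; ring
  have := hsum (T.dist x (τ 0) + 1)
  omega

lemma dist_ray_le (hT : T.Connected) (hτ : ∀ n, T.Adj (τ n) (τ (n + 1))) (s i : ℕ) :
    T.dist (τ s) (τ (s + i)) ≤ i := by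
  induction i with
  | zero => simp
  | succ i ih =>
    calc T.dist (τ s) (τ (s + (i + 1)))
        ≤ T.dist (τ s) (τ (s + i)) + T.dist (τ (s + i)) (τ (s + i + 1)) := hT.dist_triangle
      _ ≤ i + 1 := by rw [dist_eq_one_iff_adj.mpr (hτ _)]; omega

/-- The quantity `s - d(τ s, x)` is nondecreasing in `s` and constant from `s = n` on. -/
lemma not_inHoroball_of_recedesFrom (hT : T.Connected) (hτ : ∀ n, T.Adj (τ n) (τ (n + 1)))
    {x : V} {n : ℕ} {r : ℝ} (hx : RecedesFrom T τ x n)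
    (hr : (n : ℝ) - T.dist x (τ n) < r) : ¬ InHoroball T τ r x := by
  rintro ⟨s, hs⟩
  rw [dist_comm] at hs
  rcases le_or_gt n s with hns | hsn
  · have h := hx (s - n)
    rw [Nat.add_sub_cancel' hns] at h
    rw [h] at hs
    push_cast [hns] at hs
    linarith
  · have hray := dist_ray_le hT hτ s (n - s)
    rw [Nat.add_sub_cancel' hsn.le] at hray
    have htri : T.dist x (τ n) ≤ T.dist x (τ s) + T.dist (τ s) (τ n) := hT.dist_triangle
    have : (T.dist x (τ n) : ℝ) ≤ T.dist x (τ s) + (n - s) := by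
      rw [← Nat.cast_sub hsn.le]; exact_mod_cast htri.trans (by omega)
    linarith

/-- Pigeonhole on the finitely many `G`-classes of edges. -/
lemma exists_smul_ray_edge_eq {G : Type*} [Group G] [MulAction G V] (hlf : T.LocallyFinite)
    (hact : ∀ (g : G) (x y : V), T.Adj x y → T.Adj (g • x) (g • y))
    (hcocompact : ∃ s : Finset V, ∀ v : V, ∃ g : G, g • v ∈ s)
    (hτ : ∀ n, T.Adj (τ n) (τ (n + 1))) (J K : ℕ) :
    ∃ (n m : ℕ) (h : G), J ≤ n ∧ n + K ≤ m ∧ h • τ n = τ m ∧ h • τ (n + 1) = τ (m + 1) := by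
  classical
  let := hlf
  obtain ⟨s, hs⟩ := hcocompact
  choose g hg using fun j ↦ hs (τ j)
  let edges : Finset (V × V) := s.biUnion fun x ↦ (T.neighborFinset x).image fun y ↦ (x, y)
  let idx : ℕ → ℕ := fun a ↦ J + (K + 1) * a
  have hmem : ∀ a, (g (idx a) • τ (idx a), g (idx a) • τ (idx a + 1)) ∈ edges := fun a ↦
    Finset.mem_biUnion.mpr ⟨_, hg _, Finset.mem_image.mpr
      ⟨_, (mem_neighborFinset _ _ _).mpr (hact _ _ _ (hτ _)), rfl⟩⟩
  obtain ⟨a, b, hab, heq⟩ := Finite.exists_ne_map_eq_of_infinite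
    fun a ↦ (⟨_, hmem a⟩ : edges)
  simp only [Subtype.mk.injEq, Prod.mk.injEq] at heq
  have hgap : ∀ {a b}, a < b → idx a + K ≤ idx b := fun hlt ↦ by
    have := Nat.mul_le_mul_left (K + 1) hlt
    simp only [idx]; rw [Nat.mul_succ] at this; omega
  rcases Nat.lt_or_gt_of_ne hab with hlt | hlt
  · exact ⟨idx a, idx b, (g (idx b))⁻¹ * g (idx a), Nat.le_add_right _ _, hgap hlt,
      by rw [mul_smul, heq.1, inv_smul_smul], by rw [mul_smul, heq.2, inv_smul_smul]⟩
  · exact ⟨idx b, idx a, (g (idx a))⁻¹ * g (idx b), Nat.le_add_right _ _, hgap hlt,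
      by rw [mul_smul, ← heq.1, inv_smul_smul], by rw [mul_smul, ← heq.2, inv_smul_smul]⟩

end Ray

theorem stmt19_general {W V : Type*} (S : SimpleGraph W) (T : SimpleGraph V)
    (hS : S.IsTree) (hT : T.IsTree) (hlf : T.LocallyFinite)
    (G : Type*) [Group G] [MulAction G W] [MulAction G V]
    (hactS : ∀ (g : G) (x y : W), S.Adj x y → S.Adj (g • x) (g • y))
    (hactT : ∀ (g : G) (x y : V), T.Adj x y → T.Adj (g • x) (g • y))
    (hcocompact : ∃ s : Finset V, ∀ v : V, ∃ g : G, g • v ∈ s)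
    (q : W → V)
    (hequiv : ∀ (g : G) (w : W), q (g • w) = g • q w)
    (hlocsurj : ∀ (w : W) (v' : V), T.Adj (q w) v' → ∃ w' : W, S.Adj w w' ∧ q w' = v')
    (τ : ℕ → V) (hτ : IsGeodRay T τ)
    (hfaced : CollapsingPairFacesRay S T q τ) :
    ∀ lam : ℝ, 0 < lam →
      ∃ y₁ y₂ : W, InHoroball T τ 0 (q y₁) ∧ InHoroball T τ 0 (q y₂) ∧
        ∀ (c : ℕ → W) (n : ℕ), c 0 = y₁ → c n = y₂ →
          (∀ i < n, S.Adj (c i) (c (i + 1))) →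
          ∃ i ≤ n, ¬ InHoroball T τ (-lam) (q (c i)) := by
  intro lam _
  obtain ⟨p, w₁, w₂, hpw₁, hpw₂, hw₁₂, hqw, N, hface⟩ := hfaced
  obtain ⟨t, ht⟩ := exists_recedesFrom hT hτ (q p)
  obtain ⟨n, m, h, hn, hnm, hτn, hτn₁⟩ :=
    exists_smul_ray_edge_eq hlf hactT hcocompact hτ.1 (max N t) (t + ⌈lam⌉₊ + 1)
  have hdist : ∀ w k, T.dist (q (h⁻¹ • w)) (τ k) = T.dist (q w) (h • τ k) := fun w k ↦ by
    rw [hequiv, hT.connected.dist_inv_smul hactT]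
  have hrecedes : RecedesFrom T τ (q (h⁻¹ • p)) n := recedesFrom_of_dist_succ hT hτ (by
    rw [hdist, hdist, hτn, hτn₁]; exact ht.mono (by omega) 1)
  have hfar : n + ⌈lam⌉₊ + 1 ≤ T.dist (q (h⁻¹ • p)) (τ n) := by
    have := ht (m - t)
    rw [Nat.add_sub_cancel' (by omega)] at this
    rw [hdist, hτn, this]; omega
  have hdeep : ¬ InHoroball T τ (-lam) (q (h⁻¹ • p)) := by
    refine not_inHoroball_of_recedesFrom hT.connected hτ.1 hrecedes ?_
    have : ((n + ⌈lam⌉₊ + 1 : ℕ) : ℝ) ≤ T.dist (q (h⁻¹ • p)) (τ n) := by exact_mod_cast hfar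
    push_cast at this
    linarith [Nat.le_ceil lam]
  obtain ⟨y₁, y₂, hy₁, hy₂, hsep⟩ := exists_lifts_separated_by hS.isAcyclic hT.connected
    hlocsurj (hactS h⁻¹ _ _ hpw₁) (hactS h⁻¹ _ _ hpw₂) ((MulAction.injective h⁻¹).ne hw₁₂)
    (by rw [hequiv, hequiv, hqw]) (by rw [hdist, hdist, hτn]; exact hface m (by omega))
  refine ⟨y₁, y₂, ⟨n, by simp [hy₁]⟩, ⟨n, by simp [hy₂]⟩, fun c k hc₀ hck hc ↦ ?_⟩
  obtain ⟨w, hw⟩ := exists_walk_of_adj_chain c k hc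
  obtain ⟨i, hi, hci⟩ := hw _ (by simpa using hsep (w.copy hc₀ hck))
  exact ⟨i, hi, hci ▸ hdeep⟩

/-- Let `G` act cocompactly on an infinite locally finite tree
`T`, let `q : T̃ → T` be a locally surjective `G`-equivariant morphism from a
minimal `G`-tree `T̃`, and let `τ` be a geodesic ray representing an end `E` of
`T` faced by some collapsing pair.  Then for every `λ > 0` there are points
`y₁, y₂` of `q⁻¹(HB_0(τ))` lying in different connected components of
`q⁻¹(HB_{-λ}(τ))`: no combinatorial path inside `q⁻¹(HB_{-λ}(τ))` joins them. -/
theorem stmt19 {W V : Type*} (S : SimpleGraph W) (T : SimpleGraph V)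
    (hS : S.IsTree) (hT : T.IsTree) (hinf : Infinite V) (hlf : T.LocallyFinite)
    (G : Type*) [Group G] [MulAction G W] [MulAction G V]
    (hactS : ∀ (g : G) (x y : W), S.Adj x y → S.Adj (g • x) (g • y))
    (hactT : ∀ (g : G) (x y : V), T.Adj x y → T.Adj (g • x) (g • y))
    (hcocompact : ∃ s : Finset V, ∀ v : V, ∃ g : G, g • v ∈ s)
    (hmin : IsMinimalGTree S G)
    (q : W → V) (hq : ∀ a b : W, S.Adj a b → T.Adj (q a) (q b))
    (hequiv : ∀ (g : G) (w : W), q (g • w) = g • q w)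
    (hlocsurj : ∀ (w : W) (v' : V), T.Adj (q w) v' → ∃ w' : W, S.Adj w w' ∧ q w' = v')
    (τ : ℕ → V) (hτ : IsGeodRay T τ)
    (hfaced : CollapsingPairFacesRay S T q τ) :
    ∀ lam : ℝ, 0 < lam →
      ∃ y₁ y₂ : W, InHoroball T τ 0 (q y₁) ∧ InHoroball T τ 0 (q y₂) ∧
        ∀ (c : ℕ → W) (n : ℕ), c 0 = y₁ → c n = y₂ →
          (∀ i < n, S.Adj (c i) (c (i + 1))) →
          ∃ i ≤ n, ¬ InHoroball T τ (-lam) (q (c i)) :=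
  stmt19_general S T hS hT hlf G hactS hactT hcocompact q hequiv hlocsurj τ hτ hfaced
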